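/- Let k be a commutative ring, m ≥ 1, G = ℤ/mℤ with fixed generator g, and kG its group algebra with its standard Hopf algebra structure. Let α : kG → k be a character, ζ = α(g) (an m-th root of unity in k), and π = g^s an element with ζ^s = 1 (so α(π) = 1). For n ≥ 1 define χ_n : (kG)^{⊗n} → (kG)^{⊗n} by χ_n(g^{i_1} ⊗ … ⊗ g^{i_n}) = ζ^{i_1 + ⋯ + i_n} · g^{i_1} ⊗ … ⊗ g^{i_n} for 0 ≤ i_1, …, i_n < m (and χ_0 = id_k). Then χ is an isomorphism of cyclic modules from the Connes–Moscovici cyclic module C^{(π,α,α)}(kG) to C^{(π,ε,ε)}(kG): χ commutes with all face maps, degeneracies and cyclic operators of the two cyclic modules, and it is bijective, with inverse given by the analogous map built from ζ^{-1}. -/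

import Mathlib

/-!
On an elementary tensor `x₁ ⊗ ⋯ ⊗ xₙ` of group elements, `χ` is multiplication by
`α(x₁) ⋯ α(xₙ)`, and `α` restricts to a group homomorphism `G → k`. Every structure map of either
cyclic module sends such a tensor to a scalar multiple of another one, so each intertwining
relation reduces to an identity between scalars. Contracting two adjacent entries or inserting
`1` does not change the product of the `α(xᵢ)`; the outer faces trade the factor `α(x₀)` or
`α(xₙ)` against `ε = 1`; and the new first entry `π (x₁ ⋯ xₙ)⁻¹` of the cyclic operator contributes
`α(π) α(x₁ ⋯ xₙ)⁻¹ = α(x₁ ⋯ xₙ)⁻¹`. The inverse twists by `α^{m-1}`, since `α(x)^m = α(x^m) = 1`.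
-/

open scoped TensorProduct
open PiTensorProduct

namespace CMGrp

variable (k : Type) [CommRing k] (m : ℕ) [NeZero m]

/-- The cyclic group `ℤ/mℤ`. -/
abbrev Zm := Multiplicative (ZMod m)

/-- The group algebra `k(ℤ/mℤ)`. -/
abbrev A := MonoidAlgebra k (Zm m)

/-- The chains of the Connes–Moscovici cyclic module: `C_n = (k(ℤ/mℤ))^{⊗n}`. -/
abbrev MW (n : ℕ) : Type := ⨂[k] (_ : Fin n), A k m

/-- The faces, degeneracies and cyclic operator of the Connes–Moscovici cyclic
module of the group algebra `k(ℤ/mℤ)` attached to `(π, α, β)`, characterized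
on elementary tensors of group elements. -/
noncomputable def IsCMcyclicModule (π : Zm m) (α β : A k m →ₐ[k] k)
    (d : ∀ n : ℕ, ℕ → (MW k m (n + 1) →ₗ[k] MW k m n))
    (s : ∀ n : ℕ, ℕ → (MW k m n →ₗ[k] MW k m (n + 1)))
    (t : ∀ n : ℕ, MW k m n →ₗ[k] MW k m n) : Prop :=
  (∀ (n : ℕ) (g : Fin (n + 1) → Zm m),
    d n 0 (tprod k fun i => MonoidAlgebra.of k (Zm m) (g i)) =
      α (MonoidAlgebra.of k (Zm m) (g 0)) •
        tprod k (fun v : Fin n => MonoidAlgebra.of k (Zm m) (g v.succ))) ∧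
  (∀ (n i : ℕ), 1 ≤ i → i ≤ n → ∀ (g : Fin (n + 1) → Zm m),
    d n i (tprod k fun i => MonoidAlgebra.of k (Zm m) (g i)) =
      tprod k (fun v : Fin n =>
        if (v : ℕ) + 1 < i then MonoidAlgebra.of k (Zm m) (g v.castSucc)
        else if (v : ℕ) + 1 = i then MonoidAlgebra.of k (Zm m) (g v.castSucc * g v.succ)
        else MonoidAlgebra.of k (Zm m) (g v.succ))) ∧
  (∀ (n : ℕ) (g : Fin (n + 1) → Zm m),
    d n (n + 1) (tprod k fun i => MonoidAlgebra.of k (Zm m) (g i)) =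
      β (MonoidAlgebra.of k (Zm m) (g (Fin.last n))) •
        tprod k (fun v : Fin n => MonoidAlgebra.of k (Zm m) (g v.castSucc))) ∧
  (∀ (n i : ℕ) (hi : i ≤ n) (g : Fin n → Zm m),
    s n i (tprod k fun l => MonoidAlgebra.of k (Zm m) (g l)) =
      tprod k (fun v : Fin (n + 1) =>
        if h : (v : ℕ) < i then
          MonoidAlgebra.of k (Zm m) (g ⟨(v : ℕ), by have := v.isLt; omega⟩)
        else if h2 : (v : ℕ) = i then 1
        else MonoidAlgebra.of k (Zm m) (g ⟨(v : ℕ) - 1, by have := v.isLt; omega⟩))) ∧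
  (t 0 = LinearMap.id) ∧
  (∀ (n : ℕ) (g : Fin (n + 1) → Zm m),
    t (n + 1) (tprod k fun i => MonoidAlgebra.of k (Zm m) (g i)) =
      (α (MonoidAlgebra.of k (Zm m) ((List.ofFn g).prod)) *
          β (MonoidAlgebra.of k (Zm m) (g (Fin.last n)))) •
        PiTensorProduct.tprod k (Fin.cons
          (MonoidAlgebra.of k (Zm m) (π * ((List.ofFn g).prod)⁻¹))
          (fun i : Fin n => MonoidAlgebra.of k (Zm m) (g i.castSucc))))

/-- The counit of the group algebra: `ε(g) = 1`. -/
noncomputable def gcounit : A k m →ₐ[k] k := MonoidAlgebra.lift k k (Zm m) 1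

/-- `χ` is the family of maps
`χ_n(g^{i₁} ⊗ ⋯ ⊗ g^{i_n}) = ξ^{i₁+⋯+i_n} · g^{i₁} ⊗ ⋯ ⊗ g^{i_n}`
(for `0 ≤ i_l < m`), built from the scalar `ξ`. -/
noncomputable def IsChi (g : Zm m) (ξ : k)
    (χ : ∀ n : ℕ, MW k m n →ₗ[k] MW k m n) : Prop :=
  (χ 0 = LinearMap.id) ∧
  ∀ (n : ℕ) (i : Fin n → ℕ), (∀ l, i l < m) →
    χ n (tprod k fun l => MonoidAlgebra.of k (Zm m) (g ^ (i l))) =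
      (ξ ^ (∑ l, i l)) •
        tprod k (fun l => MonoidAlgebra.of k (Zm m) (g ^ (i l)))

section FinTuple

variable {M N : Type*} {n : ℕ}

theorem prod_contractNth_castSucc [CommMonoid M] (f : Fin (n + 1) → M) (a : Fin n) :
    ∏ l, Fin.contractNth a.castSucc (· * ·) f l = ∏ l, f l := by
  have h := congrFun (Fin.partialProd_contractNth f a.castSucc) (Fin.last n)
  rw [Function.comp_apply, Fin.succAbove_of_le_castSucc _ _ (by simp [Fin.le_def])] at h
  simpa [Fin.partialProd, ← List.prod_ofFn, List.take_of_length_le] using h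

theorem ite_eq_contractNth [Mul M] (φ : M → N) (g : Fin (n + 1) → M) {i : ℕ} (hi : 1 ≤ i)
    (hin : i ≤ n) :
    (fun v : Fin n =>
      if (v : ℕ) + 1 < i then φ (g v.castSucc)
      else if (v : ℕ) + 1 = i then φ (g v.castSucc * g v.succ)
      else φ (g v.succ)) =
    fun v => φ (Fin.contractNth (⟨i - 1, by omega⟩ : Fin n).castSucc (· * ·) g v) := by
  funext v
  simp only [Fin.contractNth, Fin.val_castSucc]
  split_ifs <;> first | rfl | omega

theorem dite_eq_insertNth (φ : M → N) (x : M) (g : Fin n → M) {i : ℕ} (hi : i ≤ n) :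
    (fun v : Fin (n + 1) =>
      if h : (v : ℕ) < i then φ (g ⟨(v : ℕ), by have := v.isLt; omega⟩)
      else if h2 : (v : ℕ) = i then φ x
      else φ (g ⟨(v : ℕ) - 1, by have := v.isLt; omega⟩)) =
    fun v => φ (Fin.insertNth (α := fun _ => M) ⟨i, by omega⟩ x g v) := by
  funext v
  rcases lt_trichotomy (v : ℕ) i with h | h | h
  · rw [dif_pos h, Fin.insertNth_apply_below (Fin.lt_def.2 h), eq_rec_constant]; rfl
  · rw [dif_neg (by omega), dif_pos h, show v = ⟨i, by omega⟩ from Fin.ext h,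
      Fin.insertNth_apply_same]
  · rw [dif_neg (by omega), dif_neg (by omega), Fin.insertNth_apply_above (Fin.lt_def.2 h),
      eq_rec_constant]; rfl

end FinTuple

section Twist

variable {R G : Type*} [CommRing R] [Monoid G] {n : ℕ}

def IsTwist (ψ : G → R)
    (f : (⨂[R] (_ : Fin n), MonoidAlgebra R G) →ₗ[R] ⨂[R] (_ : Fin n), MonoidAlgebra R G) :
    Prop :=
  ∀ x : Fin n → G, f (tprod R fun l => MonoidAlgebra.of R G (x l)) =
    (∏ l, ψ (x l)) • tprod R fun l => MonoidAlgebra.of R G (x l)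

noncomputable def restrictChar (α : MonoidAlgebra R G →ₐ[R] R) : G →* R :=
  (α : MonoidAlgebra R G →* R).comp (MonoidAlgebra.of R G)

@[simp]
theorem restrictChar_apply (α : MonoidAlgebra R G →ₐ[R] R) (x : G) :
    restrictChar α x = α (MonoidAlgebra.of R G x) :=
  rfl

theorem tprod_of_ext {N : Type*} [AddCommMonoid N] [Module R N]
    {f₁ f₂ : (⨂[R] (_ : Fin n), MonoidAlgebra R G) →ₗ[R] N}
    (h : ∀ x : Fin n → G, f₁ (tprod R fun l => MonoidAlgebra.of R G (x l)) =
      f₂ (tprod R fun l => MonoidAlgebra.of R G (x l))) : f₁ = f₂ :=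
  PiTensorProduct.ext <|
    Module.Basis.ext_multilinear (fun _ => MonoidAlgebra.basis G R) fun x => by
      simpa [MonoidAlgebra.basis_apply] using h x

theorem IsTwist.comp_eq_id {ψ₁ ψ₂ : G → R}
    {f₁ f₂ : (⨂[R] (_ : Fin n), MonoidAlgebra R G) →ₗ[R] ⨂[R] (_ : Fin n), MonoidAlgebra R G}
    (h₁ : IsTwist ψ₁ f₁) (h₂ : IsTwist ψ₂ f₂) (h : ∀ x, ψ₁ x * ψ₂ x = 1) :
    f₂ ∘ₗ f₁ = LinearMap.id :=
  tprod_of_ext fun x => by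
    simp only [LinearMap.comp_apply, h₁ x, map_smul, h₂ x, smul_smul, ← Finset.prod_mul_distrib,
      h, Finset.prod_const_one, one_smul, LinearMap.id_apply]

theorem IsTwist.comp_eq_comp {n' : ℕ} {ψ : G → R}
    {f : (⨂[R] (_ : Fin n), MonoidAlgebra R G) →ₗ[R] ⨂[R] (_ : Fin n), MonoidAlgebra R G}
    {f' : (⨂[R] (_ : Fin n'), MonoidAlgebra R G) →ₗ[R] ⨂[R] (_ : Fin n'), MonoidAlgebra R G}
    (hf : IsTwist ψ f) (hf' : IsTwist ψ f')
    {D D' : (⨂[R] (_ : Fin n), MonoidAlgebra R G) →ₗ[R] ⨂[R] (_ : Fin n'), MonoidAlgebra R G}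
    (y : (Fin n → G) → Fin n' → G) (c c' : (Fin n → G) → R)
    (hD : ∀ x, D (tprod R fun l => MonoidAlgebra.of R G (x l)) =
      c x • tprod R fun l => MonoidAlgebra.of R G (y x l))
    (hD' : ∀ x, D' (tprod R fun l => MonoidAlgebra.of R G (x l)) =
      c' x • tprod R fun l => MonoidAlgebra.of R G (y x l))
    (hc : ∀ x, (∏ l, ψ (x l)) * c x = c' x * ∏ l, ψ (y x l)) :
    D ∘ₗ f = f' ∘ₗ D' :=
  tprod_of_ext fun x => by
    simp only [LinearMap.comp_apply, hf x, map_smul, hD x, hD' x, hf' (y x), smul_smul, hc x]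

end Twist

section CyclicGroup

variable {k m}

theorem exists_lt_pow_eq {g : Zm m} (hg : ∀ x : Zm m, ∃ j : ℕ, g ^ j = x) (x : Zm m) :
    ∃ j < m, g ^ j = x := by
  obtain ⟨j, rfl⟩ := hg x
  refine ⟨j % m, Nat.mod_lt _ (NeZero.pos m), ?_⟩
  simpa using pow_mod_card g j

theorem IsChi.isTwist {g : Zm m} (hg : ∀ x : Zm m, ∃ j : ℕ, g ^ j = x) {ψ : Zm m →* k}
    {χ : ∀ n : ℕ, MW k m n →ₗ[k] MW k m n} (hχ : IsChi k m g (ψ g) χ) (n : ℕ) :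
    IsTwist ψ (χ n) := by
  intro x
  choose e he hge using exists_lt_pow_eq hg
  have hx : x = fun l => g ^ e (x l) := funext fun l => (hge (x l)).symm
  rw [hx, hχ.2 n _ fun l => he _]
  simp only [map_pow, Finset.prod_pow_eq_pow_sum]

theorem Zm.pow_eq_one (x : Zm m) : x ^ m = 1 := by
  simpa using pow_card_eq_one (x := x)

section Intertwining

omit [NeZero m]

@[simp]
theorem gcounit_of (x : Zm m) : gcounit k m (MonoidAlgebra.of k (Zm m) x) = 1 := by
  simp [gcounit]

variable {π : Zm m} {α : A k m →ₐ[k] k}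
  {dA dE : ∀ n : ℕ, ℕ → (MW k m (n + 1) →ₗ[k] MW k m n)}
  {sA sE : ∀ n : ℕ, ℕ → (MW k m n →ₗ[k] MW k m (n + 1))}
  {tA tE : ∀ n : ℕ, MW k m n →ₗ[k] MW k m n}
  {χ : ∀ n : ℕ, MW k m n →ₗ[k] MW k m n}

theorem face_comp_eq_comp_face (hA : IsCMcyclicModule k m π α α dA sA tA)
    (hE : IsCMcyclicModule k m π (gcounit k m) (gcounit k m) dE sE tE)
    (hχ : ∀ n, IsTwist (restrictChar α) (χ n)) {n i : ℕ} (hi : i ≤ n + 1) :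
    dE n i ∘ₗ χ (n + 1) = χ n ∘ₗ dA n i := by
  obtain ⟨hA₀, hA, hAₗ, -⟩ := hA
  obtain ⟨hE₀, hE, hEₗ, -⟩ := hE
  obtain rfl | hi₁ := Nat.eq_zero_or_pos i
  · refine (hχ _).comp_eq_comp (hχ _) (fun x v => x v.succ) (fun _ => 1)
      (fun x => α (MonoidAlgebra.of k (Zm m) (x 0))) (fun x => by rw [hE₀, gcounit_of])
      (hA₀ n) fun x => ?_
    rw [Fin.prod_univ_succ, mul_one]
    rfl
  obtain hin | rfl : i ≤ n ∨ i = n + 1 := by omega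
  · refine (hχ _).comp_eq_comp (hχ _)
      (fun x => Fin.contractNth (⟨i - 1, by omega⟩ : Fin n).castSucc (· * ·) x) (fun _ => 1)
      (fun _ => 1)
      (fun x => by rw [hE n i hi₁ hin, ite_eq_contractNth _ _ hi₁ hin, one_smul])
      (fun x => by rw [hA n i hi₁ hin, ite_eq_contractNth _ _ hi₁ hin, one_smul])
      fun x => ?_
    rw [mul_one, one_mul]
    refine (prod_contractNth_castSucc (restrictChar α ∘ x) ⟨i - 1, by omega⟩).symm.trans ?_
    rw [← Fin.comp_contractNth _ _ (map_mul (restrictChar α))]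
    rfl
  · refine (hχ _).comp_eq_comp (hχ _) (fun x v => x v.castSucc) (fun _ => 1)
      (fun x => α (MonoidAlgebra.of k (Zm m) (x (Fin.last n)))) (fun x => by rw [hEₗ, gcounit_of])
      (hAₗ n) fun x => ?_
    rw [Fin.prod_univ_castSucc, mul_one, mul_comm]
    rfl

theorem degeneracy_comp_eq_comp_degeneracy (hA : IsCMcyclicModule k m π α α dA sA tA)
    (hE : IsCMcyclicModule k m π (gcounit k m) (gcounit k m) dE sE tE)
    (hχ : ∀ n, IsTwist (restrictChar α) (χ n)) {n i : ℕ} (hi : i ≤ n) :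
    sE n i ∘ₗ χ n = χ (n + 1) ∘ₗ sA n i := by
  obtain ⟨-, -, -, hA, -⟩ := hA
  obtain ⟨-, -, -, hE, -⟩ := hE
  refine (hχ _).comp_eq_comp (hχ _)
    (fun x => Fin.insertNth (α := fun _ => Zm m) ⟨i, by omega⟩ 1 x) (fun _ => 1) (fun _ => 1)
    (fun x => by
      rw [hE n i hi, ← map_one (MonoidAlgebra.of k (Zm m)), dite_eq_insertNth _ _ _ hi, one_smul])
    (fun x => by
      rw [hA n i hi, ← map_one (MonoidAlgebra.of k (Zm m)), dite_eq_insertNth _ _ _ hi, one_smul])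
    fun x => ?_
  rw [mul_one, one_mul, Fin.prod_univ_succAbove _ ⟨i, by omega⟩]
  simp only [Fin.insertNth_apply_same, Fin.insertNth_apply_succAbove, map_one, one_mul]

theorem cyclic_comp_eq_comp_cyclic (hA : IsCMcyclicModule k m π α α dA sA tA)
    (hE : IsCMcyclicModule k m π (gcounit k m) (gcounit k m) dE sE tE)
    (hχ : ∀ n, IsTwist (restrictChar α) (χ n)) (hπ : α (MonoidAlgebra.of k (Zm m) π) = 1)
    (n : ℕ) : tE n ∘ₗ χ n = χ n ∘ₗ tA n := by
  obtain ⟨-, -, -, -, hA₀, hA⟩ := hA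
  obtain ⟨-, -, -, -, hE₀, hE⟩ := hE
  obtain _ | n := n
  · rw [hA₀, hE₀, LinearMap.id_comp, LinearMap.comp_id]
  have hcons (y : Zm m) (q : Fin n → Zm m) :
      (Fin.cons (MonoidAlgebra.of k (Zm m) y) (fun i => MonoidAlgebra.of k (Zm m) (q i)) :
        Fin (n + 1) → A k m) =
      fun l => MonoidAlgebra.of k (Zm m) ((Fin.cons y q : Fin (n + 1) → Zm m) l) :=
    (Fin.comp_cons _ _ _).symm
  refine (hχ _).comp_eq_comp (hχ _)
    (fun x => Fin.cons (π * (List.ofFn x).prod⁻¹) fun i => x i.castSucc) (fun _ => 1)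
    (fun x => α (MonoidAlgebra.of k (Zm m) (List.ofFn x).prod) *
      α (MonoidAlgebra.of k (Zm m) (x (Fin.last n))))
    (fun x => by rw [hE, gcounit_of, gcounit_of, mul_one, hcons])
    (fun x => by rw [hA, hcons])
    fun x => ?_
  set P := (List.ofFn x).prod
  have hπP : restrictChar α (π * P⁻¹) * restrictChar α P = 1 := by
    rw [← map_mul, inv_mul_cancel_right, restrictChar_apply, hπ]
  have hy : ∏ l, restrictChar α ((Fin.cons (π * P⁻¹) fun i => x i.castSucc : Fin (n + 1) → Zm m) l)
      = restrictChar α (π * P⁻¹) * ∏ i : Fin n, restrictChar α (x i.castSucc) := by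
    rw [Fin.prod_univ_succ]
    simp only [Fin.cons_zero, Fin.cons_succ]
  rw [mul_one, Fin.prod_univ_castSucc, hy]
  change _ = restrictChar α P * restrictChar α (x (Fin.last n)) * _
  linear_combination
    -((∏ i : Fin n, restrictChar α (x i.castSucc)) * restrictChar α (x (Fin.last n))) * hπP

end Intertwining

end CyclicGroup

/-- With `ζ = α(g)` and `π = g^s`, `ζ^s = 1`, the map `χ`
is an isomorphism of cyclic modules from `C^{(π,α,α)}(kG)` to
`C^{(π,ε,ε)}(kG)`: it intertwines the faces, degeneracies and cyclic
operators, and is bijective with inverse the analogous map built from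
`ζ⁻¹ = ζ^{m-1}`. -/
theorem chi_iso_cyclic_modules
    (g : Zm m) (hg : ∀ x : Zm m, ∃ j : ℕ, g ^ j = x)
    (α : A k m →ₐ[k] k) (s : ℕ)
    (hζs : (α (MonoidAlgebra.of k (Zm m) g)) ^ s = 1)
    (dA : ∀ n : ℕ, ℕ → (MW k m (n + 1) →ₗ[k] MW k m n))
    (sA : ∀ n : ℕ, ℕ → (MW k m n →ₗ[k] MW k m (n + 1)))
    (tA : ∀ n : ℕ, MW k m n →ₗ[k] MW k m n)
    (hA : IsCMcyclicModule k m (g ^ s) α α dA sA tA)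
    (dE : ∀ n : ℕ, ℕ → (MW k m (n + 1) →ₗ[k] MW k m n))
    (sE : ∀ n : ℕ, ℕ → (MW k m n →ₗ[k] MW k m (n + 1)))
    (tE : ∀ n : ℕ, MW k m n →ₗ[k] MW k m n)
    (hE : IsCMcyclicModule k m (g ^ s) (gcounit k m) (gcounit k m) dE sE tE)
    (χ : ∀ n : ℕ, MW k m n →ₗ[k] MW k m n)
    (hχ : IsChi k m g (α (MonoidAlgebra.of k (Zm m) g)) χ)
    (χ' : ∀ n : ℕ, MW k m n →ₗ[k] MW k m n)
    (hχ' : IsChi k m g ((α (MonoidAlgebra.of k (Zm m) g)) ^ (m - 1)) χ') :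
    (∀ (n i : ℕ), i ≤ n + 1 → (dE n i) ∘ₗ (χ (n + 1)) = (χ n) ∘ₗ (dA n i)) ∧
    (∀ (n i : ℕ), i ≤ n → (sE n i) ∘ₗ (χ n) = (χ (n + 1)) ∘ₗ (sA n i)) ∧
    (∀ n : ℕ, (tE n) ∘ₗ (χ n) = (χ n) ∘ₗ (tA n)) ∧
    (∀ n : ℕ, (χ' n) ∘ₗ (χ n) = LinearMap.id ∧ (χ n) ∘ₗ (χ' n) = LinearMap.id) := by
  have hχ : ∀ n, IsTwist (restrictChar α) (χ n) := IsChi.isTwist hg (ψ := restrictChar α) hχ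
  have hχ' : ∀ n, IsTwist (restrictChar α ^ (m - 1)) (χ' n) :=
    IsChi.isTwist hg (ψ := restrictChar α ^ (m - 1)) hχ'
  have hπ : α (MonoidAlgebra.of k (Zm m) (g ^ s)) = 1 := by rw [map_pow, map_pow, hζs]
  have hinv (x : Zm m) : restrictChar α x * (restrictChar α ^ (m - 1)) x = 1 := by
    rw [MonoidHom.pow_apply, ← pow_succ', Nat.sub_add_cancel NeZero.one_le, ← map_pow,
      Zm.pow_eq_one, map_one]
  refine ⟨fun n i hi => face_comp_eq_comp_face hA hE hχ hi,
    fun n i hi => degeneracy_comp_eq_comp_degeneracy hA hE hχ hi,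
    cyclic_comp_eq_comp_cyclic hA hE hχ hπ, fun n =>
      ⟨(hχ n).comp_eq_id (hχ' n) hinv,
        (hχ' n).comp_eq_id (hχ n) fun x => (mul_comm _ _).trans (hinv x)⟩⟩

end CMGrp
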